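/- There is a bijection between strict subsets S ⊊ ℤ/nℤ and cyclically decreasing elements of the affine symmetric group S̃_n: each strict subset S corresponds to a unique cyclically decreasing element whose reduced words use exactly the generators {s_i : i ∈ S}. -/

import Mathlib

/-- The defining relators of the affine symmetric group `S̃_n`. -/
def affineRels (n : ℕ) : Set (FreeGroup (ZMod n)) :=
  {r | (∃ i : ZMod n, r = FreeGroup.of i * FreeGroup.of i) ∨
       (∃ i : ZMod n, r = FreeGroup.of i * FreeGroup.of (i + 1) * FreeGroup.of i *
          (FreeGroup.of (i + 1) * FreeGroup.of i * FreeGroup.of (i + 1))⁻¹) ∨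
       (∃ i j : ZMod n, j ≠ i ∧ j ≠ i + 1 ∧ i ≠ j + 1 ∧
          r = FreeGroup.of i * FreeGroup.of j * (FreeGroup.of j * FreeGroup.of i)⁻¹)}

/-- The affine symmetric group `S̃_n`. -/
abbrev AffineSymmetricGroup (n : ℕ) := PresentedGroup (affineRels n)

/-- The product of the word `l` of simple generators in `S̃_n`. -/
def awordProd (n : ℕ) (l : List (ZMod n)) : AffineSymmetricGroup n :=
  (l.map PresentedGroup.of).prod

/-- `l` is a reduced word for `w ∈ S̃_n`. -/
def IsReducedAWord (n : ℕ) (w : AffineSymmetricGroup n) (l : List (ZMod n)) : Prop :=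
  awordProd n l = w ∧ ∀ l' : List (ZMod n), awordProd n l' = w → l.length ≤ l'.length

/-- A word with letters in `ℤ/nℤ` is cyclically decreasing if each letter occurs at
most once and, whenever `i` and `i+1` both occur, `i+1` precedes `i`. -/
def IsCyclicallyDecreasingWord (n : ℕ) (l : List (ZMod n)) : Prop :=
  l.Nodup ∧ ∀ i : ZMod n, i ∈ l → i + 1 ∈ l → l.idxOf (i + 1) < l.idxOf i

/-- An affine permutation is cyclically decreasing if it has a cyclically decreasing
reduced word. -/
def IsCyclicallyDecreasing (n : ℕ) (w : AffineSymmetricGroup n) : Prop :=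
  ∃ l : List (ZMod n), IsCyclicallyDecreasingWord n l ∧ IsReducedAWord n w l

/-!
`S̃_n` acts on `ℤ`, the generator `s_i` swapping `x` and `x + 1` for every `x ≡ i`. A word avoiding
the letter `i` never moves a point across the cut between `c` and `c + 1` when `c ≡ i`. In a
cyclically decreasing word containing `i`, the letters acting before `s_i` avoid `i` and `i + 1`,
and those acting after it avoid `i - 1` and `i`, so the word sends `c + 1` to `c`. Hence every word
for the product of a cyclically decreasing word `l` uses all letters of `l`: cyclically decreasing
words are reduced, and every reduced word of their product has the same support. Conversely, two
cyclically decreasing words with the same support are related by commutations, and a proper subset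
`S` is the support of the cyclically decreasing word listing `S` in the order `m - 1, m - 2, …` for
some `m ∉ S`.
-/

namespace AffineSymmetricGroup

variable {n : ℕ}

lemma of_mul_of_comm {i j : ZMod n} (h1 : j ≠ i) (h2 : j ≠ i + 1) (h3 : i ≠ j + 1) :
    (PresentedGroup.of i : AffineSymmetricGroup n) * PresentedGroup.of j =
      PresentedGroup.of j * PresentedGroup.of i :=
  PresentedGroup.mk_eq_mk_of_mul_inv_mem (Or.inr (Or.inr ⟨i, j, h1, h2, h3, rfl⟩))

def affineSwapFun (n : ℕ) (i : ZMod n) (x : ℤ) : ℤ :=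
  if (x : ZMod n) = i then x + 1 else if (x : ZMod n) = i + 1 then x - 1 else x

lemma affineSwapFun_of_ne {i : ZMod n} {x : ℤ} (h : (x : ZMod n) ≠ i)
    (h' : (x : ZMod n) ≠ i + 1) : affineSwapFun n i x = x := by
  simp [affineSwapFun, h, h']

variable [Nontrivial (ZMod n)]

lemma affineSwapFun_involutive (i : ZMod n) : Function.Involutive (affineSwapFun n i) := by
  intro x
  by_cases h : (x : ZMod n) = i
  · simp [affineSwapFun, h]
  by_cases h' : (x : ZMod n) = i + 1
  · simp [affineSwapFun, h']
  simp [affineSwapFun_of_ne h h']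

def affineSwap (i : ZMod n) : Equiv.Perm ℤ := (affineSwapFun_involutive i).toPerm

lemma affineSwap_apply (i : ZMod n) (x : ℤ) : affineSwap i x = affineSwapFun n i x := rfl

lemma affineSwap_apply_of_ne {i : ZMod n} {x : ℤ} (h : (x : ZMod n) ≠ i)
    (h' : (x : ZMod n) ≠ i + 1) : affineSwap i x = x :=
  affineSwapFun_of_ne h h'

lemma affineSwap_apply_add_one {i : ZMod n} {x : ℤ} (hx : (x : ZMod n) = i) :
    affineSwap i (x + 1) = x := by
  simp [affineSwap_apply, affineSwapFun, hx]

lemma affineSwap_apply_le_iff {i : ZMod n} {c : ℤ} (hc : (c : ZMod n) ≠ i) (x : ℤ) :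
    affineSwap i x ≤ c ↔ x ≤ c := by
  by_cases h : (x : ZMod n) = i
  · have : x ≠ c := by rintro rfl; exact hc h
    rw [affineSwap_apply, affineSwapFun, if_pos h]
    omega
  by_cases h' : (x : ZMod n) = i + 1
  · have : x ≠ c + 1 := by rintro rfl; push_cast at h'; exact hc (add_right_cancel h')
    rw [affineSwap_apply, affineSwapFun, if_neg h, if_pos h']
    omega
  rw [affineSwap_apply_of_ne h h']

lemma affineSwap_mul_self (i : ZMod n) : affineSwap i * affineSwap i = 1 :=
  Equiv.ext (affineSwapFun_involutive i)

lemma affineSwap_braid (h2 : (2 : ZMod n) ≠ 0) (i : ZMod n) :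
    affineSwap i * affineSwap (i + 1) * affineSwap i =
      affineSwap (i + 1) * affineSwap i * affineSwap (i + 1) := by
  have h21 : (2 : ZMod n) ≠ 1 := fun h => one_ne_zero (by linear_combination h)
  ext x
  simp only [Equiv.Perm.mul_apply, affineSwap_apply]
  by_cases h : (x : ZMod n) = i
  · simp [affineSwapFun, h, add_assoc, one_add_one_eq_two, h2, h21]
  by_cases h' : (x : ZMod n) = i + 1
  · simp [affineSwapFun, h', add_assoc, one_add_one_eq_two, h2, h21]
  by_cases h'' : (x : ZMod n) = i + 1 + 1
  · have e : i + 2 - 1 = i + 1 := by ring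
    simp [affineSwapFun, h'', add_assoc, one_add_one_eq_two, h2, h21, e]
  simp [affineSwapFun, h, h', h'']

lemma affineSwap_commute {i j : ZMod n} (h1 : j ≠ i) (h2 : j ≠ i + 1) (h3 : i ≠ j + 1) :
    affineSwap i * affineSwap j = affineSwap j * affineSwap i := by
  ext x
  simp only [Equiv.Perm.mul_apply, affineSwap_apply]
  by_cases h : (x : ZMod n) = i
  · simp [affineSwapFun, h, h3, Ne.symm h1, Ne.symm h2]
  by_cases h' : (x : ZMod n) = i + 1
  · simp [affineSwapFun, h', h3, Ne.symm h1, Ne.symm h2]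
  by_cases h'' : (x : ZMod n) = j
  · simp [affineSwapFun, h'', h1, h2, Ne.symm h3]
  by_cases h''' : (x : ZMod n) = j + 1
  · simp [affineSwapFun, h''', h1, h2, Ne.symm h3]
  simp [affineSwapFun, h, h', h'', h''']

lemma lift_affineSwap_eq_one_of_mem_affineRels (h2 : (2 : ZMod n) ≠ 0) :
    ∀ r ∈ affineRels n, FreeGroup.lift affineSwap r = 1 := by
  rintro r (⟨i, rfl⟩ | ⟨i, rfl⟩ | ⟨i, j, hji, hji1, hij1, rfl⟩) <;>
    simp only [map_mul, map_inv, FreeGroup.lift_apply_of, mul_inv_eq_one]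
  · exact affineSwap_mul_self i
  · exact affineSwap_braid h2 i
  · exact affineSwap_commute hji hji1 hij1

def toPerm (h2 : (2 : ZMod n) ≠ 0) : AffineSymmetricGroup n →* Equiv.Perm ℤ :=
  PresentedGroup.toGroup (lift_affineSwap_eq_one_of_mem_affineRels h2)

lemma toPerm_awordProd (h2 : (2 : ZMod n) ≠ 0) (l : List (ZMod n)) :
    toPerm h2 (awordProd n l) = (l.map affineSwap).prod := by
  simp [awordProd, toPerm, map_list_prod, Function.comp_def]

lemma prod_map_affineSwap_apply_of_forall_ne {l : List (ZMod n)} {x : ℤ}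
    (h : ∀ j ∈ l, (x : ZMod n) ≠ j ∧ (x : ZMod n) ≠ j + 1) :
    (l.map affineSwap).prod x = x := by
  induction l with
  | nil => rfl
  | cons a l ih =>
    simp only [List.forall_mem_cons] at h
    rw [List.map_cons, List.prod_cons, Equiv.Perm.mul_apply, ih h.2,
      affineSwap_apply_of_ne h.1.1 h.1.2]

lemma prod_map_affineSwap_apply_le_iff {l : List (ZMod n)} {c : ℤ}
    (h : ∀ j ∈ l, (c : ZMod n) ≠ j) (x : ℤ) :
    (l.map affineSwap).prod x ≤ c ↔ x ≤ c := by
  induction l generalizing x with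
  | nil => rfl
  | cons a l ih =>
    simp only [List.forall_mem_cons] at h
    rw [List.map_cons, List.prod_cons, Equiv.Perm.mul_apply, affineSwap_apply_le_iff h.1,
      ih h.2]

end AffineSymmetricGroup

section CyclicallyDecreasingWords

open AffineSymmetricGroup

variable {n : ℕ}

lemma awordProd_cons (a : ZMod n) (l : List (ZMod n)) :
    awordProd n (a :: l) = PresentedGroup.of a * awordProd n l := by
  simp [awordProd]

lemma awordProd_append_cons_of_commute {a : ZMod n} {u : List (ZMod n)}
    (hu : ∀ b ∈ u, b ≠ a ∧ b ≠ a + 1 ∧ a ≠ b + 1) (v : List (ZMod n)) :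
    awordProd n (u ++ a :: v) = awordProd n (a :: (u ++ v)) := by
  induction u with
  | nil => rfl
  | cons b u ih =>
    simp only [List.forall_mem_cons] at hu
    obtain ⟨⟨hba, hba1, hab1⟩, hu⟩ := hu
    rw [List.cons_append, awordProd_cons, ih hu, awordProd_cons, awordProd_cons,
      ← mul_assoc, ← of_mul_of_comm hba hba1 hab1, mul_assoc, ← awordProd_cons]
    rfl

def descendingResidues (n : ℕ) (m : ZMod n) : List (ZMod n) :=
  (List.range (n - 1)).map fun k : ℕ => m - 1 - (k : ZMod n)

lemma mem_descendingResidues [NeZero n] {m x : ZMod n} :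
    x ∈ descendingResidues n m ↔ x ≠ m := by
  simp only [descendingResidues, List.mem_map, List.mem_range]
  constructor
  · rintro ⟨k, hk, rfl⟩ h
    have : ((k + 1 : ℕ) : ZMod n) = 0 := by push_cast; linear_combination -h
    have := Nat.le_of_dvd k.succ_pos ((ZMod.natCast_eq_zero_iff _ _).1 this)
    omega
  · intro hx
    refine ⟨(m - 1 - x).val, ?_, by rw [ZMod.natCast_zmod_val]; ring⟩
    have hlt := ZMod.val_lt (m - 1 - x)
    refine lt_of_le_of_ne (by omega) fun h => hx ?_
    have : (((m - 1 - x).val + 1 : ℕ) : ZMod n) = (n : ℕ) := by congr 1; omega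
    push_cast [ZMod.natCast_zmod_val, ZMod.natCast_self] at this
    linear_combination -this

variable [Nontrivial (ZMod n)]

lemma isCyclicallyDecreasingWord_iff {l : List (ZMod n)} :
    IsCyclicallyDecreasingWord n l ↔ l.Nodup ∧ l.Pairwise (fun a b => b ≠ a + 1) := by
  refine ⟨fun ⟨hnodup, hidx⟩ => ⟨hnodup, List.pairwise_iff_getElem.2 ?_⟩,
    fun ⟨hnodup, hpair⟩ => ⟨hnodup, fun a ha ha1 => ?_⟩⟩
  · intro p q hp hq hpq hqp
    have := hidx l[p] (List.getElem_mem hp) (hqp ▸ List.getElem_mem hq)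
    rw [← hqp, hnodup.idxOf_getElem, hnodup.idxOf_getElem] at this
    omega
  · have hp := List.idxOf_lt_length_iff.2 ha
    have hq := List.idxOf_lt_length_iff.2 ha1
    rcases lt_trichotomy (l.idxOf (a + 1)) (l.idxOf a) with hlt | heq | hgt
    · exact hlt
    · exact absurd (add_eq_left.1 ((List.idxOf_inj ha1).1 heq)) one_ne_zero
    · exact absurd (by rw [List.getElem_idxOf hp, List.getElem_idxOf hq])
        (List.pairwise_iff_getElem.1 hpair _ _ hp hq hgt)

lemma IsCyclicallyDecreasingWord.sublist {l l' : List (ZMod n)}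
    (hl : IsCyclicallyDecreasingWord n l) (h : l'.Sublist l) : IsCyclicallyDecreasingWord n l' := by
  rw [isCyclicallyDecreasingWord_iff] at hl ⊢
  exact ⟨hl.1.sublist h, hl.2.sublist h⟩

lemma isCyclicallyDecreasingWord_descendingResidues (m : ZMod n) :
    IsCyclicallyDecreasingWord n (descendingResidues n m) := by
  rw [isCyclicallyDecreasingWord_iff, descendingResidues]
  constructor
  · refine List.nodup_range.map_on fun k hk k' hk' h => ?_
    rw [List.mem_range] at hk hk'
    exact CharP.natCast_injOn_Iio (ZMod n) n (by omega : k < n) (by omega : k' < n)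
      (by linear_combination -h)
  · refine List.pairwise_map.2 (List.pairwise_lt_range.imp_of_mem fun {k k'} hk hk' hlt h => ?_)
    rw [List.mem_range] at hk hk'
    have := CharP.natCast_injOn_Iio (ZMod n) n (by omega : k < n) (by omega : k' + 1 < n)
      (by push_cast; linear_combination h)
    omega

lemma exists_isCyclicallyDecreasingWord_toFinset_eq [NeZero n] {S : Finset (ZMod n)}
    (hS : S ≠ Finset.univ) : ∃ l, IsCyclicallyDecreasingWord n l ∧ l.toFinset = S := by
  obtain ⟨m, hm⟩ : ∃ m, m ∉ S := by simpa [Finset.eq_univ_iff_forall] using hS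
  refine ⟨(descendingResidues n m).filter (· ∈ S),
    (isCyclicallyDecreasingWord_descendingResidues m).sublist List.filter_sublist, ?_⟩
  ext x
  simp only [List.mem_toFinset, List.mem_filter, mem_descendingResidues, decide_eq_true_eq]
  exact ⟨And.right, fun hx => ⟨fun h => hm (h ▸ hx), hx⟩⟩

lemma IsCyclicallyDecreasingWord.toFinset_ne_univ [NeZero n] {l : List (ZMod n)}
    (hl : IsCyclicallyDecreasingWord n l) : l.toFinset ≠ Finset.univ := by
  rw [isCyclicallyDecreasingWord_iff] at hl
  intro huniv
  have hall (x : ZMod n) : x ∈ l := List.mem_toFinset.1 (huniv ▸ Finset.mem_univ x)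
  cases l with
  | nil => exact List.not_mem_nil (hall 0)
  | cons a l =>
    rcases List.mem_cons.1 (hall (a + 1)) with h | h
    · exact one_ne_zero (add_eq_left.1 h)
    · exact (List.pairwise_cons.1 hl.2).1 _ h rfl

lemma IsCyclicallyDecreasingWord.awordProd_eq_of_toFinset_eq {l l' : List (ZMod n)}
    (hl : IsCyclicallyDecreasingWord n l) (hl' : IsCyclicallyDecreasingWord n l')
    (h : l.toFinset = l'.toFinset) : awordProd n l = awordProd n l' := by
  rw [isCyclicallyDecreasingWord_iff] at hl hl'
  induction l generalizing l' with
  | nil =>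
    rw [List.toFinset_nil, eq_comm, List.toFinset_eq_empty_iff] at h
    rw [h]
  | cons a t ih =>
    obtain ⟨u, v, rfl⟩ := List.append_of_mem (List.mem_toFinset.1 (h ▸ List.mem_toFinset.2
      List.mem_cons_self))
    have ha1 : a + 1 ∉ u ++ a :: v := by
      rw [← List.mem_toFinset, ← h, List.mem_toFinset, List.mem_cons]
      rintro (h | h)
      · exact one_ne_zero (add_eq_left.1 h)
      · exact (List.pairwise_cons.1 hl.2).1 _ h rfl
    have hpair := List.pairwise_append.1 (hl'.1.and hl'.2)
    have hu : ∀ b ∈ u, b ≠ a ∧ b ≠ a + 1 ∧ a ≠ b + 1 := fun b hb =>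
      let h := hpair.2.2 b hb a List.mem_cons_self
      ⟨h.1, fun e => ha1 (e ▸ List.mem_append_left _ hb), h.2⟩
    have hsub : (u ++ v).Sublist (u ++ a :: v) := (List.sublist_cons_self a v).append_left u
    have hsupp : t.toFinset = (u ++ v).toFinset := by
      have hat := (List.nodup_cons.1 hl.1).1
      have hauv : a ∉ u ++ v := (List.nodup_cons.1 (List.nodup_middle.1 hl'.1)).1
      calc t.toFinset = (insert a t.toFinset).erase a := by
            rw [Finset.erase_insert (by simpa using hat)]
        _ = (insert a (u ++ v).toFinset).erase a := by
            rw [← List.toFinset_cons, h, List.toFinset_eq_of_perm _ _ List.perm_middle,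
              List.toFinset_cons]
        _ = (u ++ v).toFinset := Finset.erase_insert (by simpa using hauv)
    rw [awordProd_append_cons_of_commute hu, awordProd_cons, awordProd_cons,
      ih ⟨(List.nodup_cons.1 hl.1).2, (List.pairwise_cons.1 hl.2).2⟩ ⟨hl'.1.sublist hsub,
        hl'.2.sublist hsub⟩ hsupp]

lemma IsCyclicallyDecreasingWord.toFinset_subset_of_awordProd_eq (h2 : (2 : ZMod n) ≠ 0)
    {l l' : List (ZMod n)} (hl : IsCyclicallyDecreasingWord n l)
    (h : awordProd n l = awordProd n l') : l.toFinset ⊆ l'.toFinset := by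
  intro i hi
  rw [List.mem_toFinset] at hi ⊢
  obtain ⟨c, rfl⟩ := ZMod.intCast_surjective i
  obtain ⟨u, v, rfl⟩ := List.append_of_mem hi
  rw [isCyclicallyDecreasingWord_iff] at hl
  have hpair := List.pairwise_append.1 (hl.1.and hl.2)
  have hu : ∀ j ∈ u, (c : ZMod n) ≠ j ∧ (c : ZMod n) ≠ j + 1 := fun j hj =>
    let h := hpair.2.2 j hj c List.mem_cons_self
    ⟨h.1.symm, h.2⟩
  have hv : ∀ j ∈ v, ((c + 1 : ℤ) : ZMod n) ≠ j ∧ ((c + 1 : ℤ) : ZMod n) ≠ j + 1 := by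
    intro j hj
    obtain ⟨hcj, hjc⟩ := (List.pairwise_cons.1 hpair.2.1).1 j hj
    push_cast
    exact ⟨hjc.symm, fun h => hcj (add_right_cancel h)⟩
  have hmove : ((u ++ (c : ZMod n) :: v).map affineSwap).prod (c + 1) = c := by
    rw [List.map_append, List.prod_append, List.map_cons, List.prod_cons, Equiv.Perm.mul_apply,
      Equiv.Perm.mul_apply, prod_map_affineSwap_apply_of_forall_ne hv,
      affineSwap_apply_add_one rfl, prod_map_affineSwap_apply_of_forall_ne hu]
  by_contra hcl'
  have hcut := prod_map_affineSwap_apply_le_iff (l := l') (c := c)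
    (fun j hj hcj => hcl' (hcj ▸ hj)) (c + 1)
  rw [← toPerm_awordProd h2, ← h, toPerm_awordProd, hmove] at hcut
  omega

lemma IsCyclicallyDecreasingWord.isReducedAWord (h2 : (2 : ZMod n) ≠ 0)
    {l : List (ZMod n)} (hl : IsCyclicallyDecreasingWord n l) :
    IsReducedAWord n (awordProd n l) l := by
  refine ⟨rfl, fun l' hl' => ?_⟩
  calc l.length = l.toFinset.card := (List.toFinset_card_of_nodup hl.1).symm
    _ ≤ l'.toFinset.card := Finset.card_le_card (hl.toFinset_subset_of_awordProd_eq h2 hl'.symm)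
    _ ≤ l'.length := List.toFinset_card_le l'

lemma IsCyclicallyDecreasingWord.toFinset_eq_of_isReducedAWord (h2 : (2 : ZMod n) ≠ 0)
    {l l' : List (ZMod n)} (hl : IsCyclicallyDecreasingWord n l)
    (hl' : IsReducedAWord n (awordProd n l) l') : l'.toFinset = l.toFinset := by
  refine (Finset.eq_of_subset_of_card_le (hl.toFinset_subset_of_awordProd_eq h2 hl'.1.symm) ?_).symm
  calc l'.toFinset.card ≤ l'.length := List.toFinset_card_le l'
    _ ≤ l.length := hl'.2 l rfl
    _ = l.toFinset.card := (List.toFinset_card_of_nodup hl.1).symm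

end CyclicallyDecreasingWords

/-- There is a bijection between strict subsets `S ⊊ ℤ/nℤ` and cyclically decreasing
elements of the affine symmetric group `S̃_n`, sending `S` to the unique cyclically
decreasing element whose reduced words use exactly the simple generators `{s_i : i ∈ S}`. -/
theorem cyclicallyDecreasing_bijection (n : ℕ) [NeZero n] (hn : 2 < n) :
    ∃ e : {S : Finset (ZMod n) // S ≠ Finset.univ} ≃
          {w : AffineSymmetricGroup n // IsCyclicallyDecreasing n w},
      ∀ S : {S : Finset (ZMod n) // S ≠ Finset.univ}, ∀ l : List (ZMod n),
        IsReducedAWord n ((e S) : AffineSymmetricGroup n) l → l.toFinset = (S : Finset (ZMod n)) := by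
  have : Fact (1 < n) := ⟨by omega⟩
  have h2 : (2 : ZMod n) ≠ 0 := by
    intro h
    have := (ZMod.natCast_eq_zero_iff 2 n).1 (by exact_mod_cast h)
    exact absurd (Nat.le_of_dvd two_pos this) (by omega)
  choose word hword using fun S : {S : Finset (ZMod n) // S ≠ Finset.univ} =>
    exists_isCyclicallyDecreasingWord_toFinset_eq S.2
  let e (S : {S : Finset (ZMod n) // S ≠ Finset.univ}) :
      {w : AffineSymmetricGroup n // IsCyclicallyDecreasing n w} :=
    ⟨awordProd n (word S), word S, (hword S).1, (hword S).1.isReducedAWord h2⟩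
  have he_inj : Function.Injective e := fun S T hST => Subtype.ext <| by
    rw [← (hword S).2, ← (hword T).2]
    exact ((hword S).1.toFinset_subset_of_awordProd_eq h2 (congrArg Subtype.val hST)).antisymm
      ((hword T).1.toFinset_subset_of_awordProd_eq h2 (congrArg Subtype.val hST).symm)
  have he_surj : Function.Surjective e := by
    rintro ⟨_, l, hl, rfl, -⟩
    exact ⟨⟨l.toFinset, hl.toFinset_ne_univ⟩,
      Subtype.ext <| (hword _).1.awordProd_eq_of_toFinset_eq hl (hword _).2⟩
  exact ⟨Equiv.ofBijective e ⟨he_inj, he_surj⟩, fun S l hl =>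
    ((hword S).1.toFinset_eq_of_isReducedAWord h2 hl).trans (hword S).2⟩
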